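/- Let f be a smooth function near 0 ∈ ℝ² with f(0,0) = 0 and ∇f(0,0) ≠ (0,0), and set Lf(x,y) = −y·∂f/∂x(x,y) + x·∂f/∂y(x,y) (the Lie derivative of f along the rotational field (−y, x)). Then for every smooth function F defined near 0 there exist a neighborhood V of 0 and smooth functions u, v on V such that F = F(0,0) + u·f + v·Lf on V. (Hence the germ f has codimension 1: the quotient of the smooth germs at 0 by the ideal generated by f and Lf is spanned by the class of the constant 1.) -/

import Mathlib

/-!
By Hadamard's lemma, a smooth function `G` on `ℝ²` satisfies `G p = G 0 + α p p` for a smooth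
family of covectors `α` with `α 0 = dG(0)`. Apply this to `f`, to `Lf` and to `F`, getting
`α`, `β`, `γ`. Since the rotational field `J` vanishes at the origin, `β 0 = d(Lf)(0) = df(0) ∘ J`,
and `df(0)`, `df(0) ∘ J` are linearly independent when `df(0) ≠ 0`. So `α p`, `β p` remain a
basis of the covectors near `0`, and expanding `γ p = u p • α p + v p • β p` by Cramer's rule gives
`F p = F 0 + u p * f p + v p * Lf p` with smooth `u`, `v`.
-/

open Set Filter Topology Metric

section ParametricIntegral

variable {E F : Type*} [NormedAddCommGroup E] [NormedSpace ℝ E]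
  [NormedAddCommGroup F] [NormedSpace ℝ F] {a b : ℝ}

theorem hasFDerivAt_intervalIntegral_of_contDiff [ProperSpace E] {H : E × ℝ → F}
    (hH : ContDiff ℝ 1 H) (x₀ : E) :
    HasFDerivAt (fun x => ∫ t in a..b, H (x, t))
      (∫ t in a..b, (fderiv ℝ H (x₀, t)).comp (ContinuousLinearMap.inl ℝ E ℝ)) x₀ := by
  set H' : E × ℝ → E →L[ℝ] F := fun q => (fderiv ℝ H q).comp (ContinuousLinearMap.inl ℝ E ℝ)
  have hH' : Continuous H' := (hH.continuous_fderiv one_ne_zero).clm_comp continuous_const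
  obtain ⟨C, hC⟩ := ((isCompact_closedBall x₀ 1).prod
    (isCompact_uIcc (a := a) (b := b))).exists_bound_of_continuousOn hH'.continuousOn
  refine intervalIntegral.hasFDerivAt_integral_of_dominated_of_fderiv_le
    (F' := fun x t => H' (x, t)) (bound := fun _ => C) (ball_mem_nhds x₀ one_pos)
    (.of_forall fun x => (hH.continuous.comp (Continuous.prodMk_right x)).aestronglyMeasurable)
    ((hH.continuous.comp (Continuous.prodMk_right x₀)).intervalIntegrable a b)
    (hH'.comp (Continuous.prodMk_right x₀)).aestronglyMeasurable
    (.of_forall fun t ht x hx => hC _ ⟨ball_subset_closedBall hx, uIoc_subset_uIcc ht⟩)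
    intervalIntegrable_const (.of_forall fun t _ x _ => ?_)
  exact ((hH.differentiable one_ne_zero (x, t)).hasFDerivAt).comp x (hasFDerivAt_prodMk_left x t)

theorem contDiff_intervalIntegral_of_contDiff [FiniteDimensional ℝ E] {n : ℕ∞} {H : E × ℝ → F}
    (hH : ContDiff ℝ n H) : ContDiff ℝ n (fun x => ∫ t in a..b, H (x, t)) := by
  suffices ∀ k : ℕ, ∀ H : E × ℝ → F, ContDiff ℝ k H →
      ContDiff ℝ k (fun x => ∫ t in a..b, H (x, t)) by
    induction n with
    | top => exact contDiff_infty.2 fun k => this k H (hH.of_le (by exact_mod_cast le_top))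
    | coe n => exact this n H hH
  intro k
  induction k with
  | zero =>
    intro H hH
    exact contDiff_zero.2 (intervalIntegral.continuous_parametric_intervalIntegral_of_continuous'
      (f := fun x t => H (x, t)) hH.continuous a b)
  | succ k ih =>
    intro H hH
    have hH1 : ContDiff ℝ 1 H := hH.of_le (by exact_mod_cast Nat.le_add_left 1 k)
    have hderiv x := hasFDerivAt_intervalIntegral_of_contDiff (a := a) (b := b) hH1 x
    rw [Nat.cast_succ] at hH ⊢
    refine contDiff_succ_iff_fderiv_apply.2
      ⟨fun x => (hderiv x).differentiableAt, fun h => by simp at h, fun y => ?_⟩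
    have hcont : Continuous fun q => fderiv ℝ H q := hH1.continuous_fderiv one_ne_zero
    have hfderiv_apply : (fun x => fderiv ℝ (fun x => ∫ t in a..b, H (x, t)) x y)
        = fun x => ∫ t in a..b, fderiv ℝ H (x, t) (y, 0) := by
      ext x
      rw [(hderiv x).fderiv, ContinuousLinearMap.intervalIntegral_apply (((hcont.comp
        (Continuous.prodMk_right x)).clm_comp continuous_const).intervalIntegrable _ _)]
      rfl
    rw [hfderiv_apply]
    exact ih _ ((contDiff_succ_iff_fderiv_apply.1 hH).2.2 (y, 0))

end ParametricIntegral

section Hadamard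

variable {E F : Type*} [NormedAddCommGroup E] [NormedSpace ℝ E]
  [NormedAddCommGroup F] [NormedSpace ℝ F]

noncomputable def hadamardQuotient (G : E → F) (x : E) : E →L[ℝ] F :=
  ∫ t in (0 : ℝ)..1, fderiv ℝ G (t • x)

@[simp]
theorem hadamardQuotient_zero [CompleteSpace F] (G : E → F) :
    hadamardQuotient G 0 = fderiv ℝ G 0 := by
  simp [hadamardQuotient]

theorem contDiff_hadamardQuotient [FiniteDimensional ℝ E] {m : ℕ∞} {n : WithTop ℕ∞}
    {G : E → F} (hG : ContDiff ℝ n G) (hmn : m + 1 ≤ n) :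
    ContDiff ℝ m (hadamardQuotient G) :=
  contDiff_intervalIntegral_of_contDiff
    ((hG.fderiv_right hmn).comp (contDiff_snd.smul contDiff_fst))

theorem add_hadamardQuotient_apply [CompleteSpace F] {G : E → F} (hG : ContDiff ℝ 1 G)
    (x : E) :
    G 0 + hadamardQuotient G x x = G x := by
  have hcont : Continuous fun t : ℝ => fderiv ℝ G (t • x) :=
    (hG.continuous_fderiv one_ne_zero).comp (continuous_id.smul continuous_const)
  have hderiv (t : ℝ) : HasDerivAt (fun t : ℝ => G (t • x)) (fderiv ℝ G (t • x) x) t := by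
    have := (hG.differentiable one_ne_zero (t • x)).hasFDerivAt.comp_hasDerivAt t
      ((hasDerivAt_id t).smul_const x)
    rwa [one_smul] at this
  rw [hadamardQuotient, ContinuousLinearMap.intervalIntegral_apply (hcont.intervalIntegrable _ _),
    intervalIntegral.integral_eq_sub_of_hasDerivAt (fun t _ => hderiv t)
      ((hcont.clm_apply continuous_const).intervalIntegrable _ _)]
  simp

end Hadamard

theorem ContDiffOn.exists_contDiff_eventuallyEq {E F : Type*} [NormedAddCommGroup E]
    [NormedSpace ℝ E] [HasContDiffBump E] [NormedAddCommGroup F] [NormedSpace ℝ F]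
    {n : ℕ∞} {f : E → F} {s : Set E} {x : E} (hf : ContDiffOn ℝ n f s) (hs : s ∈ 𝓝 x) :
    ∃ g : E → F, ContDiff ℝ n g ∧ g =ᶠ[𝓝 x] f := by
  obtain ⟨r, hr, hrs⟩ := Metric.mem_nhds_iff.1 (interior_mem_nhds.2 hs)
  let χ : ContDiffBump x := ⟨r / 4, r / 2, by positivity, by linarith⟩
  refine ⟨fun y => χ y • f y, contDiff_iff_contDiffAt.2 fun y => ?_, ?_⟩
  · by_cases hy : y ∈ interior s
    · exact χ.contDiffAt.smul (hf.contDiffAt (mem_interior_iff_mem_nhds.1 hy))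
    · have hχy : y ∉ tsupport χ := fun h => hy <| hrs <| by
        rw [χ.tsupport_eq] at h
        exact mem_ball.2 ((mem_closedBall.1 h).trans_lt (by simp [χ]; linarith))
      refine (contDiffAt_const (c := (0 : F))).congr_of_eventuallyEq ?_
      filter_upwards [notMem_tsupport_iff_eventuallyEq.1 hχy] with z hz
      simp [hz]
  · filter_upwards [χ.eventuallyEq_one] with y hy
    simp [hy]

open scoped ContDiff

theorem hasFDerivAt_fderiv_apply_clm_zero {E F : Type*} [NormedAddCommGroup E]
    [NormedSpace ℝ E] [NormedAddCommGroup F] [NormedSpace ℝ F] {g : E → F} (A : E →L[ℝ] E)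
    (hg : DifferentiableAt ℝ (fderiv ℝ g) 0) :
    HasFDerivAt (fun x => fderiv ℝ g x (A x)) ((fderiv ℝ g 0).comp A) 0 := by
  simpa using hg.hasFDerivAt.clm_apply A.hasFDerivAt

def rotationField : ℝ × ℝ →L[ℝ] ℝ × ℝ :=
  (-ContinuousLinearMap.snd ℝ ℝ ℝ).prod (ContinuousLinearMap.fst ℝ ℝ ℝ)

@[simp]
theorem rotationField_apply (p : ℝ × ℝ) : rotationField p = (-p.2, p.1) := rfl

def dualDet (α β : ℝ × ℝ →L[ℝ] ℝ) : ℝ := α (1, 0) * β (0, 1) - α (0, 1) * β (1, 0)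

theorem ContDiff.dualDet {E : Type*} [NormedAddCommGroup E] [NormedSpace ℝ E]
    {n : WithTop ℕ∞} {α β : E → ℝ × ℝ →L[ℝ] ℝ} (hα : ContDiff ℝ n α) (hβ : ContDiff ℝ n β) :
    ContDiff ℝ n fun x => _root_.dualDet (α x) (β x) := by
  unfold _root_.dualDet
  fun_prop

theorem ContinuousLinearMap.ext_basis_prod {ℓ ℓ' : ℝ × ℝ →L[ℝ] ℝ} (h₁ : ℓ (1, 0) = ℓ' (1, 0))
    (h₂ : ℓ (0, 1) = ℓ' (0, 1)) : ℓ = ℓ' :=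
  ContinuousLinearMap.prod_ext (ContinuousLinearMap.ext_ring h₁)
    (ContinuousLinearMap.ext_ring h₂)

theorem eq_smul_add_smul_of_dualDet_ne_zero {α β : ℝ × ℝ →L[ℝ] ℝ} (h : dualDet α β ≠ 0)
    (γ : ℝ × ℝ →L[ℝ] ℝ) :
    γ = (dualDet γ β / dualDet α β) • α + (dualDet α γ / dualDet α β) • β := by
  unfold dualDet at *
  apply ContinuousLinearMap.ext_basis_prod <;>
  · simp only [add_apply, smul_apply, smul_eq_mul]
    rw [div_mul_eq_mul_div, div_mul_eq_mul_div, ← add_div, eq_div_iff h]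
    ring

-- `dualDet ℓ (ℓ.comp rotationField) = -(ℓ (1, 0) ^ 2 + ℓ (0, 1) ^ 2)`
theorem dualDet_comp_rotationField_ne_zero {ℓ : ℝ × ℝ →L[ℝ] ℝ} (hℓ : ℓ ≠ 0) :
    dualDet ℓ (ℓ.comp rotationField) ≠ 0 := by
  have : ℓ (1, 0) ≠ 0 ∨ ℓ (0, 1) ≠ 0 := by
    contrapose! hℓ
    exact ContinuousLinearMap.ext_basis_prod (by simp [hℓ.1]) (by simp [hℓ.2])
  have hneg : ℓ (-1, 0) = -ℓ (1, 0) := by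
    rw [← map_neg, Prod.neg_mk, neg_zero]
  simp only [dualDet, ContinuousLinearMap.comp_apply, rotationField_apply, neg_zero, hneg]
  rcases this with h | h <;>
    nlinarith [sq_pos_of_ne_zero h, sq_nonneg (ℓ (1, 0)), sq_nonneg (ℓ (0, 1))]

theorem exists_eq_add_mul_add_mul_of_dualDet_ne_zero {φ ψ Φ : ℝ × ℝ → ℝ}
    (hφ : ContDiff ℝ ∞ φ) (hψ : ContDiff ℝ ∞ ψ) (hΦ : ContDiff ℝ ∞ Φ) (hφ0 : φ 0 = 0)
    (hψ0 : ψ 0 = 0) (hdet : dualDet (fderiv ℝ φ 0) (fderiv ℝ ψ 0) ≠ 0) :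
    ∃ V : Set (ℝ × ℝ), IsOpen V ∧ 0 ∈ V ∧ ∃ u v : ℝ × ℝ → ℝ,
      ContDiffOn ℝ ∞ u V ∧ ContDiffOn ℝ ∞ v V ∧ ∀ p ∈ V, Φ p = Φ 0 + u p * φ p + v p * ψ p := by
  set α := hadamardQuotient φ
  set β := hadamardQuotient ψ
  set γ := hadamardQuotient Φ
  have hα : ContDiff ℝ ∞ α := contDiff_hadamardQuotient hφ le_rfl
  have hβ : ContDiff ℝ ∞ β := contDiff_hadamardQuotient hψ le_rfl
  have hγ : ContDiff ℝ ∞ γ := contDiff_hadamardQuotient hΦ le_rfl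
  have hdet' : ContDiff ℝ ∞ fun p => dualDet (α p) (β p) := hα.dualDet hβ
  refine ⟨{p | dualDet (α p) (β p) ≠ 0}, isOpen_ne_fun hdet'.continuous continuous_const,
    by simpa [α, β] using hdet, fun p => dualDet (γ p) (β p) / dualDet (α p) (β p),
    fun p => dualDet (α p) (γ p) / dualDet (α p) (β p),
    (hγ.dualDet hβ).contDiffOn.div hdet'.contDiffOn fun _ hp => hp,
    (hα.dualDet hγ).contDiffOn.div hdet'.contDiffOn fun _ hp => hp, fun p hp => ?_⟩
  have hφp : α p p = φ p := by
    simpa [hφ0] using add_hadamardQuotient_apply (hφ.of_le (by simp)) p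
  have hψp : β p p = ψ p := by
    simpa [hψ0] using add_hadamardQuotient_apply (hψ.of_le (by simp)) p
  calc Φ p = Φ 0 + γ p p := (add_hadamardQuotient_apply (hΦ.of_le (by simp)) p).symm
    _ = _ := by
      conv_lhs => rw [eq_smul_add_smul_of_dualDet_ne_zero hp (γ p)]
      simp only [add_apply, smul_apply, smul_eq_mul, hφp, hψp]
      ring

/-- Let `f` be smooth near `0 ∈ ℝ²` with `f(0,0) = 0` and `∇f(0,0) ≠ 0`, and let
`Lf(x,y) = −y·∂f/∂x + x·∂f/∂y` be its Lie derivative along the rotational field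
`(−y, x)`. Then every smooth germ `F` at `0` can be written as
`F = F(0,0) + u·f + v·Lf` with smooth `u, v` near `0`: the germ `f` has
codimension 1 with respect to the ideal generated by `f` and `Lf`. -/
theorem stmt_15 (U : Set (ℝ × ℝ)) (hUo : IsOpen U) (hU0 : (0 : ℝ × ℝ) ∈ U)
    (f : ℝ × ℝ → ℝ) (hf : ContDiffOn ℝ (⊤ : ℕ∞) f U)
    (hf0 : f 0 = 0) (hdf : fderiv ℝ f 0 ≠ 0)
    (F : ℝ × ℝ → ℝ) (UF : Set (ℝ × ℝ)) (hUFo : IsOpen UF) (hUF0 : (0 : ℝ × ℝ) ∈ UF)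
    (hF : ContDiffOn ℝ (⊤ : ℕ∞) F UF) :
    ∃ V : Set (ℝ × ℝ), IsOpen V ∧ (0 : ℝ × ℝ) ∈ V ∧
      ∃ u v : ℝ × ℝ → ℝ, ContDiffOn ℝ (⊤ : ℕ∞) u V ∧ ContDiffOn ℝ (⊤ : ℕ∞) v V ∧
        ∀ p ∈ V, F p = F 0 + u p * f p + v p * fderiv ℝ f p (-p.2, p.1) := by
  obtain ⟨φ, hφ, hφf⟩ := hf.exists_contDiff_eventuallyEq (hUo.mem_nhds hU0)
  obtain ⟨Φ, hΦ, hΦF⟩ := hF.exists_contDiff_eventuallyEq (hUFo.mem_nhds hUF0)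
  obtain ⟨W, hW, hWo, hW0⟩ := _root_.eventually_nhds_iff.1 (hφf.and hΦF)
  have hdφ : ∀ p ∈ W, fderiv ℝ φ p = fderiv ℝ f p := fun p hp =>
    EventuallyEq.fderiv_eq (eventually_of_mem (hWo.mem_nhds hp) fun y hy => (hW y hy).1)
  set ψ := fun p => fderiv ℝ φ p (rotationField p)
  have hψ : ContDiff ℝ ∞ ψ := (hφ.fderiv_right le_rfl).clm_apply rotationField.contDiff
  have hdet : dualDet (fderiv ℝ φ 0) (fderiv ℝ ψ 0) ≠ 0 := by
    rw [(hasFDerivAt_fderiv_apply_clm_zero rotationField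
      ((hφ.fderiv_right (m := ∞) le_rfl).differentiable (by simp) 0)).fderiv, hdφ 0 hW0]
    exact dualDet_comp_rotationField_ne_zero hdf
  obtain ⟨V, hVo, hV0, u, v, hu, hv, huv⟩ := exists_eq_add_mul_add_mul_of_dualDet_ne_zero
    hφ hψ hΦ ((hW 0 hW0).1.trans hf0) (by simp only [ψ, map_zero]) hdet
  refine ⟨W ∩ V, hWo.inter hVo, ⟨hW0, hV0⟩, u, v, hu.mono inter_subset_right,
    hv.mono inter_subset_right, fun p hp => ?_⟩
  rw [← (hW p hp.1).2, ← (hW 0 hW0).2, huv p hp.2, ← (hW p hp.1).1, ← hdφ p hp.1]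
  rfl
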